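/- For every integer k ≥ 1, the graph K_1 ∘^2 C_{2k+1} has 4(k+1)^2 vertices and admits a strongly equitable 4-coloring, i.e. a proper 4-coloring in which each of the four color classes has exactly (k+1)^2 vertices; moreover χ_=(K_1 ∘^2 C_{2k+1}) = 4. -/

import Mathlib

open SimpleGraph Finset

/-- The corona `G ∘ H` of two graphs: one copy of `G` and `|V(G)|` copies of `H`,
the `i`-th vertex of `G` being joined to every vertex of the `i`-th copy of `H`. -/
def SimpleGraph.corona {α β : Type*} (G : SimpleGraph α) (H : SimpleGraph β) :
    SimpleGraph (α ⊕ α × β) where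
  Adj x y :=
    match x, y with
    | Sum.inl u, Sum.inl v => G.Adj u v
    | Sum.inl u, Sum.inr (v, _) => u = v
    | Sum.inr (u, _), Sum.inl v => u = v
    | Sum.inr (u, a), Sum.inr (v, b) => u = v ∧ H.Adj a b
  symm := by
    constructor
    rintro (u | ⟨u, a⟩) (v | ⟨v, b⟩) h
    · exact h.symm
    · exact h.symm
    · exact h.symm
    · exact ⟨h.1.symm, h.2.symm⟩
  loopless := by
    constructor
    rintro (u | ⟨u, a⟩) h
    · exact G.loopless.irrefl u h
    · exact H.loopless.irrefl a h.2

universe u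

/-- Vertex type of the `l`-fold corona `G ∘^l H` (with `l = 0` giving `G` itself). -/
def coronaType (α β : Type u) : ℕ → Type u
  | 0 => α
  | l + 1 => coronaType α β l ⊕ coronaType α β l × β

instance coronaType.fintype (α β : Type u) [Fintype α] [Fintype β] :
    ∀ l, Fintype (coronaType α β l)
  | 0 => inferInstanceAs (Fintype α)
  | l + 1 =>
    letI := coronaType.fintype α β l
    inferInstanceAs (Fintype (coronaType α β l ⊕ coronaType α β l × β))

/-- The `l`-fold corona `G ∘^l H`, defined by `G ∘^0 H = G` and
`G ∘^(l+1) H = (G ∘^l H) ∘ H`. -/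
def coronaPow {α β : Type u} (G : SimpleGraph α) (H : SimpleGraph β) :
    ∀ l, SimpleGraph (coronaType α β l)
  | 0 => G
  | l + 1 => (coronaPow G H l).corona H

/-- The canonical copy of a vertex of `G` inside `G ∘^l H`. -/
def coronaBase {α : Type u} (β : Type u) : ∀ l, α → coronaType α β l
  | 0 => id
  | l + 1 => fun a => Sum.inl (coronaBase β l a)

/-- `c` is an equitable `k`-coloring of `G`: it is proper and any two color classes
differ in size by at most one. -/
def SimpleGraph.IsEquitableColoring {V : Type*} [Fintype V] (G : SimpleGraph V) {k : ℕ}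
    (c : V → Fin k) : Prop :=
  (∀ ⦃u v⦄, G.Adj u v → c u ≠ c v) ∧
    ∀ i j : Fin k,
      (Finset.univ.filter fun v => c v = i).card ≤
        (Finset.univ.filter fun v => c v = j).card + 1

/-- `G` is equitably `k`-colorable. -/
def SimpleGraph.EquitablyColorable {V : Type*} [Fintype V] (G : SimpleGraph V) (k : ℕ) : Prop :=
  ∃ c : V → Fin k, G.IsEquitableColoring c

/-- The equitable chromatic number: the least `k` such that `G` is equitably `k`-colorable. -/
noncomputable def SimpleGraph.equitableChromaticNumber {V : Type*} [Fintype V]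
    (G : SimpleGraph V) : ℕ :=
  sInf {k | G.EquitablyColorable k}

/-- The maximum degree of a finite graph (no decidability assumptions). -/
noncomputable def SimpleGraph.maxDeg {V : Type*} [Fintype V] (G : SimpleGraph V) : ℕ :=
  Finset.univ.sup fun v => (G.neighborSet v).ncard

/-!
Four colors are necessary: in `(K_1 ∘ C) ∘ C` each vertex of `K_1 ∘ C` is joined to a whole copy
of the odd cycle `C = C_{2k+1}`, which already needs three colors.

They suffice: read `Fin 4` as the Klein four-group under `^^^`, color `K_1` with `0`, and give the
copy of `C` attached to a vertex of color `j` the colors `j ^^^ a`, `j ^^^ b` alternately and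
`j ^^^ c` once. The offsets `(a, b, c) = (1, 2, 3)` in the first corona leave the color counts
`n = (1, k, k, 1)`; the offsets `(2, 3, 1)` in the second then turn `n X` into
`n X + k * (n (X ^^^ 2) + n (X ^^^ 3)) + n (X ^^^ 1) = (k + 1) ^ 2` for every color `X`.
-/

def xorEmbedding (j : Fin 4) : Fin 4 ↪ Fin 4 :=
  ⟨(j ^^^ ·), by revert j; decide⟩

namespace SimpleGraph

variable {α β γ : Type*} {G : SimpleGraph α} {H : SimpleGraph β}

def Coloring.corona (C : G.Coloring γ) (D : γ → H.Coloring γ) (hD : ∀ j b, D j b ≠ j) :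
    (G.corona H).Coloring γ :=
  Coloring.mk (Sum.elim C fun p => D (C p.1) p.2) <| by
    rintro (u | ⟨u, a⟩) (v | ⟨v, b⟩) h
    · exact C.valid h
    · obtain rfl : u = v := h
      exact (hD _ b).symm
    · obtain rfl : u = v := h
      exact hD _ a
    · obtain ⟨rfl, h⟩ := h
      exact (D _).valid h

theorem Coloring.sum_corona [Fintype α] [Fintype β] {M : Type*} [AddCommMonoid M]
    (C : G.Coloring γ) (D : γ → H.Coloring γ) (hD : ∀ j b, D j b ≠ j) (f : γ → M) :
    ∑ x, f (C.corona D hD x) = ∑ u, (f (C u) + ∑ b, f (D (C u) b)) := by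
  rw [Fintype.sum_sum_type, Fintype.sum_prod_type, ← Finset.sum_add_distrib]
  rfl

theorem Colorable.of_corona [Nonempty α] {n : ℕ} (h : (G.corona H).Colorable (n + 1)) :
    H.Colorable n := by
  obtain ⟨C⟩ := h
  obtain ⟨u⟩ := ‹Nonempty α›
  let D : H.Coloring {c // c ≠ C (Sum.inl u)} :=
    Coloring.mk
      (fun b => ⟨C (Sum.inr (u, b)), (C.valid (v := Sum.inl u) (w := Sum.inr (u, b)) rfl).symm⟩)
      fun hab h => C.valid (v := Sum.inr (u, _)) (w := Sum.inr (u, _)) ⟨rfl, hab⟩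
        (congrArg Subtype.val h)
  simpa [Fintype.card_subtype_compl] using D.colorable

theorem cycleGraph_not_colorable_two_of_odd {n : ℕ} (h : 2 ≤ n) (hn : Odd n) :
    ¬(cycleGraph n).Colorable 2 := fun h2 => by
  have := h2.chromaticNumber_le
  rw [chromaticNumber_cycleGraph_of_odd n h hn] at this
  norm_num at this

theorem EquitablyColorable.colorable {V : Type*} [Fintype V] {G : SimpleGraph V} {n : ℕ}
    (h : G.EquitablyColorable n) : G.Colorable n :=
  let ⟨c, hc, _⟩ := h
  ⟨Coloring.mk c fun h => hc h⟩

theorem cycleGraph.sum_tricoloring {M : Type*} [AddCommMonoid M] (k : ℕ) (h : 2 ≤ 2 * k + 1)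
    (f : Fin 3 → M) :
    ∑ i, f (cycleGraph.tricoloring (2 * k + 1) h i) = k • f 0 + k • f 1 + f 2 := by
  let g : ℕ → M := fun m => if m % 2 = 0 then f 0 else f 1
  have hg : ∀ m, ∑ i ∈ Finset.range (2 * m), g i = m • (f 0 + f 1) := by
    intro m
    induction m with
    | zero => simp
    | succ m ih =>
      rw [show 2 * (m + 1) = 2 * m + 1 + 1 by ring, Finset.sum_range_succ, Finset.sum_range_succ,
        ih, succ_nsmul, add_assoc]
      simp [g, Nat.add_mod]
  calc ∑ i, f (cycleGraph.tricoloring (2 * k + 1) h i)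
      = ∑ i ∈ Finset.range (2 * k + 1), if i = 2 * k then f 2 else g i := by
        rw [← Fin.sum_univ_eq_sum_range]
        refine Finset.sum_congr rfl fun i _ => ?_
        simp only [cycleGraph.tricoloring, Coloring.mk, g]
        change f (if (i : ℕ) = 2 * k + 1 - 1 then 2 else ⟨i % 2, _⟩) = _
        rw [Nat.add_sub_cancel]
        split_ifs with hi hpar
        · rfl
        · congr 1; ext; simp [hpar]
        · congr 1; ext; simp; omega
    _ = k • (f 0 + f 1) + f 2 := by
        rw [Finset.sum_range_succ, if_pos rfl, ← hg k]
        congr 1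
        exact Finset.sum_congr rfl fun i hi => if_neg (by simp at hi; omega)
    _ = k • f 0 + k • f 1 + f 2 := by rw [nsmul_add]

def cycleGraph.xorColoring (k : ℕ) (hk : 1 ≤ k) (σ : Fin 3 ↪ Fin 4) (j : Fin 4) :
    (cycleGraph (2 * k + 1)).Coloring (Fin 4) :=
  (cycleGraph _).recolorOfEmbedding (σ.trans (xorEmbedding j))
    (cycleGraph.tricoloring _ (by omega))

theorem cycleGraph.xorColoring_ne (k : ℕ) (hk : 1 ≤ k) {σ : Fin 3 ↪ Fin 4} (hσ : ∀ t, σ t ≠ 0)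
    (j : Fin 4) (i : Fin (2 * k + 1)) : xorColoring k hk σ j i ≠ j := by
  have : ∀ j x : Fin 4, x ≠ 0 → j ^^^ x ≠ j := by decide
  exact this _ _ (hσ _)

theorem cycleGraph.sum_xorColoring {M : Type*} [AddCommMonoid M] (k : ℕ) (hk : 1 ≤ k)
    (σ : Fin 3 ↪ Fin 4) (j : Fin 4) (f : Fin 4 → M) :
    ∑ i, f (xorColoring k hk σ j i) = k • f (j ^^^ σ 0) + k • f (j ^^^ σ 1) + f (j ^^^ σ 2) :=
  sum_tricoloring k _ (fun t => f (j ^^^ σ t))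

end SimpleGraph

open SimpleGraph

theorem card_coronaType (α β : Type u) [Fintype α] [Fintype β] (l : ℕ) :
    Fintype.card (coronaType α β l) = Fintype.card α * (Fintype.card β + 1) ^ l := by
  induction l with
  | zero => simp only [pow_zero, mul_one]; rfl
  | succ l ih =>
    change Fintype.card (coronaType α β l ⊕ coronaType α β l × β) = _
    rw [Fintype.card_sum, Fintype.card_prod, ih]
    ring

def coronaK1OddCycleColoring (k : ℕ) (hk : 1 ≤ k) :
    ((⊥ : SimpleGraph (Fin 1)).corona (cycleGraph (2 * k + 1))).Coloring (Fin 4) :=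
  (Coloring.mk (fun _ => 0) (by simp)).corona
    (cycleGraph.xorColoring k hk ⟨![1, 2, 3], by decide⟩)
    (cycleGraph.xorColoring_ne k hk (by decide))

def coronaPowTwoK1OddCycleColoring (k : ℕ) (hk : 1 ≤ k) :
    (((⊥ : SimpleGraph (Fin 1)).corona (cycleGraph (2 * k + 1))).corona
      (cycleGraph (2 * k + 1))).Coloring (Fin 4) :=
  (coronaK1OddCycleColoring k hk).corona
    (cycleGraph.xorColoring k hk ⟨![2, 3, 1], by decide⟩)
    (cycleGraph.xorColoring_ne k hk (by decide))

theorem card_filter_coronaPowTwoK1OddCycleColoring_eq (k : ℕ) (hk : 1 ≤ k) (X : Fin 4) :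
    #{v | coronaPowTwoK1OddCycleColoring k hk v = X} = (k + 1) ^ 2 := by
  let f : Fin 4 → ℕ := fun c => if c = X then 1 else 0
  let g : Fin 4 → ℕ := fun j => f j + (k • f (j ^^^ 2) + k • f (j ^^^ 3) + f (j ^^^ 1))
  calc #{v | coronaPowTwoK1OddCycleColoring k hk v = X}
      = ∑ u, g (coronaK1OddCycleColoring k hk u) := by
        rw [card_filter, coronaPowTwoK1OddCycleColoring, Coloring.sum_corona (f := f)]
        simp only [cycleGraph.sum_xorColoring]
        rfl
    _ = g 0 + (k • g 1 + k • g 2 + g 3) := by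
        rw [coronaK1OddCycleColoring, Coloring.sum_corona (f := g)]
        simp only [cycleGraph.sum_xorColoring, Fin.sum_univ_one]
        rfl
    _ = (k + 1) ^ 2 := by fin_cases X <;> simp [g, f] <;> ring

/-- `K_1 ∘² C_{2k+1}` has `4(k+1)²` vertices, admits a strongly equitable
4-coloring (proper, each class of size exactly `(k+1)²`), and
`χ₌(K_1 ∘² C_{2k+1}) = 4`. -/
theorem coronaPow_two_K1_oddCycle (k : ℕ) (hk : 1 ≤ k) :
    Fintype.card (coronaType (Fin 1) (Fin (2 * k + 1)) 2) = 4 * (k + 1) ^ 2 ∧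
    (∃ c : coronaType (Fin 1) (Fin (2 * k + 1)) 2 → Fin 4,
      (∀ ⦃u v⦄,
        (coronaPow (⊥ : SimpleGraph (Fin 1)) (cycleGraph (2 * k + 1)) 2).Adj u v →
          c u ≠ c v) ∧
      ∀ i : Fin 4, (Finset.univ.filter fun v => c v = i).card = (k + 1) ^ 2) ∧
    (coronaPow (⊥ : SimpleGraph (Fin 1))
      (cycleGraph (2 * k + 1)) 2).equitableChromaticNumber = 4 := by
  set Γ := coronaPow (⊥ : SimpleGraph (Fin 1)) (cycleGraph (2 * k + 1)) 2
  let C := coronaPowTwoK1OddCycleColoring k hk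
  have hC := card_filter_coronaPowTwoK1OddCycleColoring_eq k hk
  have hequitable : Γ.EquitablyColorable 4 :=
    ⟨C, fun _ _ h => C.valid h, fun i j => ((hC i).trans (hC j).symm).le.trans (Nat.le_succ _)⟩
  have hminimal : ∀ m, Γ.EquitablyColorable m → 4 ≤ m := fun m hm => by
    by_contra! hm4
    exact cycleGraph_not_colorable_two_of_odd (by omega) (odd_two_mul_add_one k)
      ((hm.colorable.mono (by omega : m ≤ 3)).of_corona (α := Fin 1 ⊕ Fin 1 × Fin (2 * k + 1)))
  refine ⟨?_, ⟨C, fun _ _ h => C.valid h, hC⟩, IsLeast.csInf_eq ⟨hequitable, hminimal⟩⟩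
  rw [card_coronaType, Fintype.card_fin, Fintype.card_fin]
  ring
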